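/- For all integers n−1 ≥ r ≥ 1, the reciprocal polynomial satisfies J̄_n^{(r)}(q) = ∑_{k=1}^{n−r} ∑_{(u_1,…,u_k)} [r]_q^{u_1} [u_1]_q^{u_2} ⋯ [u_{k−1}]_q^{u_k} · q^{σ(u) + r(n−r−u_1)} · (n−r)!/(u_1!⋯u_k!), where the inner sum is over all k-tuples of strictly positive integers (u_1,…,u_k) with u_1+⋯+u_k = n−r, and σ(u) = ∑_{1 ≤ i, i+2 ≤ j ≤ k} u_i u_j. -/

import Mathlib

noncomputable section

/-- `[m]_q = 1 + q + ⋯ + q^{m-1}` as a polynomial in `q` (so `[0]_q = 0`). -/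
def qNat (m : ℕ) : Polynomial ℚ := ∑ i ∈ Finset.range m, Polynomial.X ^ i

/-- The polynomials `J_n^{(r)}(q)`: `J_n^{(0)} = δ_{n,0}`, `J_r^{(r)} = 1` for
`r ≥ 1`, and for `n > r ≥ 1` the recurrence
`J_n^{(r)} = ∑_{j=1}^{n−r} [r]_q^j q^{C(j,2)} C(n−r,j) J_{n−r}^{(j)}`.
(For `n < r` we set the unconstrained value `J_n^{(r)} = 0`.) -/
def J (n r : ℕ) : Polynomial ℚ :=
  if hr : r = 0 then (if n = 0 then 1 else 0)
  else if hn : n ≤ r then (if n = r then 1 else 0)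
  else
    ∑ j ∈ Finset.Icc 1 (n - r),
      qNat r ^ j * Polynomial.X ^ j.choose 2 * ((n - r).choose j : Polynomial ℚ) * J (n - r) j
termination_by n
decreasing_by omega


/-- The reciprocal polynomial `J̄_n^{(r)}(q) = q^{C(n−1,2)−C(r−1,2)} J_n^{(r)}(1/q)`,
i.e. the reflection of `J_n^{(r)}` at degree `C(n−1,2) − C(r−1,2)`. -/
def Jbar (n r : ℕ) : Polynomial ℚ :=
  Polynomial.reflect ((n - 1).choose 2 - (r - 1).choose 2) (J n r)

/-- The compositions of `m` into `k` strictly positive parts `(u_1, …, u_k)`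
(as functions `Fin k → ℕ`, `u i` being `u_{i+1}`). -/
def compositions (k m : ℕ) : Finset (Fin k → ℕ) :=
  (Finset.Nat.antidiagonalTuple k m).filter fun u => ∀ i, 1 ≤ u i

/-- The chain `[r]_q^{u_1} [u_1]_q^{u_2} ⋯ [u_{k−1}]_q^{u_k}`. -/
def chainQ (r k : ℕ) (u : Fin k → ℕ) : Polynomial ℚ :=
  ∏ i : Fin k,
    qNat (if (i : ℕ) = 0 then r
      else u ⟨(i : ℕ) - 1, lt_of_le_of_lt (Nat.sub_le _ _) i.isLt⟩) ^ u i

/-- `σ(u) = ∑_{1 ≤ i, i+2 ≤ j ≤ k} u_i u_j` (with `0`-based indexing of `u`). -/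
def sigmaComp (k : ℕ) (u : Fin k → ℕ) : ℕ :=
  ∑ i : Fin k, ∑ j : Fin k, if (i : ℕ) + 2 ≤ (j : ℕ) then u i * u j else 0

/-- The first part `u_1` of a tuple `u : Fin k → ℕ` (junk value `0` if `k = 0`). -/
def firstPart (k : ℕ) (u : Fin k → ℕ) : ℕ :=
  if h : 0 < k then u ⟨0, h⟩ else 0

/-!
Reflecting the defining recurrence of `J` term by term gives
`J̄_{m+r}^{(r)} = ∑_{j=1}^{m} [r]_q^j q^{r(m-j)} C(m,j) J̄_m^{(j)}`: the polynomial `[r]_q` is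
palindromic of degree `r - 1`, `deg J_n^{(r)} ≤ C(n-1,2) - C(r-1,2)`, and the degrees of the factors
of the `j`-th term add up to the reflection degree minus `r(m-j)`. Unrolling this recurrence along
the first part `j = u_1` of a composition `u = (j, v)` gives the formula: since
`σ(j, v) = j (m - j - v_1) + σ(v)`, the powers of `q` collected along the way add up to
`q^{σ(u) + r(m - u_1)}`, and the binomial coefficients multiply to the multinomial coefficient.
-/

open Polynomial Finset

namespace Polynomial

variable {R : Type*} [Semiring R]

theorem reflect_sum {ι : Type*} (s : Finset ι) (f : ι → R[X]) (N : ℕ) :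
    reflect N (∑ i ∈ s, f i) = ∑ i ∈ s, reflect N (f i) :=
  map_sum (⟨⟨reflect N, reflect_zero⟩, fun f g => reflect_add f g N⟩ : R[X] →+ R[X]) f s

theorem reflect_X_pow_add (a b : ℕ) : reflect (a + b) (X ^ a : R[X]) = X ^ b := by
  rw [reflect_monomial, revAt_le (by omega), Nat.add_sub_cancel_left]

theorem reflect_pow_of_reflect_eq {p : R[X]} {N : ℕ} (hdeg : p.natDegree ≤ N)
    (hp : reflect N p = p) (e : ℕ) : reflect (e * N) (p ^ e) = p ^ e := by
  induction e with
  | zero => simp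
  | succ e ih =>
    rw [pow_succ, add_one_mul, reflect_mul _ _ (natDegree_pow_le_of_le e hdeg) hdeg, ih, hp]

end Polynomial

theorem coeff_qNat (m j : ℕ) : (qNat m).coeff j = if j < m then 1 else 0 := by
  simp [qNat, finsetSum_coeff, coeff_X_pow]

theorem natDegree_qNat_le (m : ℕ) : (qNat m).natDegree ≤ m - 1 :=
  natDegree_le_iff_coeff_eq_zero.2 fun j hj => by rw [coeff_qNat, if_neg (by omega)]

theorem reflect_qNat (m : ℕ) : (qNat m).reflect (m - 1) = qNat m := by
  ext j
  rw [coeff_reflect, coeff_qNat, coeff_qNat]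
  rcases le_or_gt j (m - 1) with h | h
  · rw [revAt_le h]
    split_ifs <;> first | rfl | omega
  · rw [revAt_eq_self_of_lt h]

theorem J_self (r : ℕ) : J r r = 1 := by
  unfold J
  split_ifs <;> simp_all

theorem J_add_eq_sum_J {m r : ℕ} (hr : 1 ≤ r) (hm : 1 ≤ m) :
    J (m + r) r = ∑ j ∈ Icc 1 m, qNat r ^ j * X ^ j.choose 2 * (m.choose j : ℚ[X]) * J m j := by
  rw [J, dif_neg (by omega), dif_neg (by omega), Nat.add_sub_cancel]

def Jdeg (n r : ℕ) : ℕ := (n - 1).choose 2 - (r - 1).choose 2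

theorem Jdeg_add {m r j : ℕ} (hr : 1 ≤ r) (hj : 1 ≤ j) (hjm : j ≤ m) :
    Jdeg (m + r) r = j * (r - 1) + (j.choose 2 + r * (m - j)) + Jdeg m j := by
  obtain ⟨a, rfl⟩ : ∃ a, j = a + 1 := ⟨j - 1, by omega⟩
  obtain ⟨b, rfl⟩ : ∃ b, m = a + 1 + b := ⟨m - (a + 1), by omega⟩
  obtain ⟨c, rfl⟩ : ∃ c, r = c + 1 := ⟨r - 1, by omega⟩
  have h₁ : c.choose 2 ≤ (a + b + c + 1).choose 2 := Nat.choose_le_choose _ (by omega)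
  have h₂ : a.choose 2 ≤ (a + b).choose 2 := Nat.choose_le_choose _ (by omega)
  simp only [Jdeg, show a + 1 + b + (c + 1) - 1 = a + b + c + 1 by omega,
    show a + 1 + b - 1 = a + b by omega, show a + 1 + b - (a + 1) = b by omega,
    Nat.add_sub_cancel]
  qify [h₁, h₂]
  simp only [Nat.cast_choose_two]
  push_cast
  ring

theorem natDegree_J_le (n r : ℕ) : (J n r).natDegree ≤ Jdeg n r := by
  induction n using Nat.strong_induction_on generalizing r with
  | _ n ih =>
  by_cases hrec : r = 0 ∨ n ≤ r
  · unfold J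
    split_ifs <;> first | simp | omega
  obtain ⟨m, rfl⟩ : ∃ m, n = m + r := ⟨n - r, by omega⟩
  rw [J_add_eq_sum_J (by omega) (by omega)]
  refine natDegree_sum_le_of_forall_le _ _ fun j hj => ?_
  rw [mem_Icc] at hj
  have hterm : (qNat r ^ j * X ^ j.choose 2 * (m.choose j : ℚ[X]) * J m j).natDegree
      ≤ j * (r - 1) + j.choose 2 + 0 + Jdeg m j :=
    natDegree_mul_le_of_le (natDegree_mul_le_of_le (natDegree_mul_le_of_le
      (natDegree_pow_le_of_le j (natDegree_qNat_le r)) (natDegree_X_pow_le _))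
      (natDegree_natCast _).le) (ih m (by omega) j)
  rw [Jdeg_add (by omega) hj.1 hj.2]
  omega

theorem Jbar_add_eq_sum_Jbar {m r : ℕ} (hr : 1 ≤ r) (hm : 1 ≤ m) :
    Jbar (m + r) r
      = ∑ j ∈ Icc 1 m, qNat r ^ j * X ^ (r * (m - j)) * (m.choose j : ℚ[X]) * Jbar m j := by
  change reflect (Jdeg (m + r) r) _ = _
  rw [J_add_eq_sum_J hr hm, reflect_sum]
  refine sum_congr rfl fun j hj => ?_
  rw [mem_Icc] at hj
  have hq : (qNat r ^ j).natDegree ≤ j * (r - 1) := natDegree_pow_le_of_le j (natDegree_qNat_le r)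
  have hX : (X ^ j.choose 2 : ℚ[X]).natDegree ≤ j.choose 2 + r * (m - j) :=
    (natDegree_X_pow_le _).trans (Nat.le_add_right _ _)
  rw [Jdeg_add hr hj.1 hj.2, ← C_eq_natCast,
    show ∀ a b c d : ℚ[X], a * b * c * d = c * (a * b * d) from fun _ _ _ _ => by ring,
    reflect_C_mul, reflect_mul _ _ (natDegree_mul_le_of_le hq hX) (natDegree_J_le m j),
    reflect_mul _ _ hq hX, reflect_pow_of_reflect_eq (natDegree_qNat_le r) (reflect_qNat r),
    reflect_X_pow_add]
  change _ = _ * reflect (Jdeg m j) (J m j)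
  ring

theorem mem_compositions {k m : ℕ} {u : Fin k → ℕ} :
    u ∈ compositions k m ↔ ∑ i, u i = m ∧ ∀ i, 1 ≤ u i := by
  simp [compositions, Finset.Nat.mem_antidiagonalTuple]

theorem compositions_zero_zero : compositions 0 0 = {![]} := by
  ext u
  simp [mem_compositions, Subsingleton.elim u ![]]

theorem compositions_zero_of_ne_zero {m : ℕ} (hm : m ≠ 0) : compositions 0 m = ∅ := by
  ext u
  simp [mem_compositions, Ne.symm hm]

theorem compositions_eq_empty_of_lt {k m : ℕ} (h : m < k) : compositions k m = ∅ := by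
  refine eq_empty_of_forall_notMem fun u hu => ?_
  obtain ⟨hsum, hpos⟩ := mem_compositions.1 hu
  have : k ≤ ∑ i, u i := by simpa using sum_le_sum fun i (_ : i ∈ univ) => hpos i
  omega

theorem cons_mem_compositions_succ {k m j : ℕ} {v : Fin k → ℕ} :
    (Fin.cons j v : Fin (k + 1) → ℕ) ∈ compositions (k + 1) m
      ↔ j ∈ Icc 1 m ∧ v ∈ compositions k (m - j) := by
  simp only [mem_compositions, Fin.sum_univ_succ, Fin.forall_fin_succ, Fin.cons_zero,
    Fin.cons_succ, mem_Icc]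
  constructor
  · rintro ⟨hsum, hj, hv⟩
    exact ⟨⟨hj, by omega⟩, by omega, hv⟩
  · rintro ⟨⟨hj, hjm⟩, hsum, hv⟩
    exact ⟨by omega, hj, hv⟩

theorem sum_compositions_succ {M : Type*} [AddCommMonoid M] (k m : ℕ)
    (g : (Fin (k + 1) → ℕ) → M) :
    ∑ u ∈ compositions (k + 1) m, g u
      = ∑ j ∈ Icc 1 m, ∑ v ∈ compositions k (m - j), g (Fin.cons j v) := by
  rw [sum_sigma']
  refine sum_nbij' (fun u => ⟨u 0, Fin.tail u⟩) (fun p => Fin.cons p.1 p.2) (fun u hu => ?_)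
    (fun p hp => ?_) (fun u _ => Fin.cons_self_tail u) (fun p _ => ?_) (fun u _ => ?_)
  · rw [← Fin.cons_self_tail u, cons_mem_compositions_succ] at hu
    simpa using hu
  · exact cons_mem_compositions_succ.2 (mem_sigma.1 hp)
  · simp
  · simp

theorem sum_range_compositions_of_le {M : Type*} [AddCommMonoid M] {m N : ℕ} (h : m + 1 ≤ N)
    (f : (k : ℕ) → (Fin k → ℕ) → M) :
    ∑ k ∈ range N, ∑ u ∈ compositions k m, f k u
      = ∑ k ∈ range (m + 1), ∑ u ∈ compositions k m, f k u := by
  refine (sum_subset (range_subset_range.2 h) fun k _ hk => ?_).symm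
  rw [compositions_eq_empty_of_lt (by simpa using hk), sum_empty]

theorem firstPart_cons {k : ℕ} (j : ℕ) (v : Fin k → ℕ) :
    firstPart (k + 1) (Fin.cons j v) = j := by
  simp [firstPart]

theorem chainQ_cons {k : ℕ} (r j : ℕ) (v : Fin k → ℕ) :
    chainQ r (k + 1) (Fin.cons j v) = qNat r ^ j * chainQ j k v := by
  unfold chainQ
  rw [Fin.prod_univ_succ]
  congr 1
  refine prod_congr rfl fun i _ => ?_
  rw [Fin.cons_succ, if_neg (by simp)]
  congr 2
  rcases i with ⟨_ | i, hi⟩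
  · rfl
  · exact Fin.cons_succ (α := fun _ => ℕ) j v ⟨i, by omega⟩

theorem sigmaComp_cons {k : ℕ} (j : ℕ) (v : Fin k → ℕ) :
    sigmaComp (k + 1) (Fin.cons j v) = j * (∑ i, v i - firstPart k v) + sigmaComp k v := by
  cases k <;> simp [sigmaComp, firstPart, Fin.sum_univ_succ, mul_sum]

theorem multinomial_univ_cons {k : ℕ} (j : ℕ) (v : Fin k → ℕ) :
    Nat.multinomial univ (Fin.cons j v : Fin (k + 1) → ℕ)
      = (j + ∑ i, v i).choose j * Nat.multinomial univ v := by
  rw [Fin.univ_succ, Nat.multinomial_cons]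
  simp [Nat.multinomial, sum_map, prod_map]

def compositionTerm (r m k : ℕ) (u : Fin k → ℕ) : ℚ[X] :=
  chainQ r k u * X ^ (sigmaComp k u + r * (m - firstPart k u)) *
    (Nat.multinomial univ u : ℚ[X])

theorem compositionTerm_cons {r m k j : ℕ} {v : Fin k → ℕ} (hv : ∑ i, v i = m - j)
    (hjm : j ≤ m) :
    compositionTerm r m (k + 1) (Fin.cons j v)
      = qNat r ^ j * X ^ (r * (m - j)) * (m.choose j : ℚ[X]) * compositionTerm j (m - j) k v := by
  rw [compositionTerm, compositionTerm, chainQ_cons, sigmaComp_cons, firstPart_cons,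
    multinomial_univ_cons, hv, Nat.add_sub_cancel' hjm]
  push_cast
  ring

theorem Jbar_add_eq_sum_compositions (m : ℕ) {r : ℕ} (hr : 1 ≤ r) :
    Jbar (m + r) r = ∑ k ∈ range (m + 1), ∑ u ∈ compositions k m, compositionTerm r m k u := by
  induction m using Nat.strong_induction_on generalizing r with
  | _ m ih =>
  rcases Nat.eq_zero_or_pos m with rfl | hm
  · simp [Jbar, J_self, compositions_zero_zero, compositionTerm, chainQ, sigmaComp, firstPart]
  have hJbar : ∀ j ∈ Icc 1 m, Jbar m j
      = ∑ k ∈ range m, ∑ v ∈ compositions k (m - j), compositionTerm j (m - j) k v := by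
    intro j hj
    rw [mem_Icc] at hj
    rw [sum_range_compositions_of_le (by omega : m - j + 1 ≤ m), ← ih (m - j) (by omega) hj.1,
      Nat.sub_add_cancel hj.2]
  calc Jbar (m + r) r
      = ∑ j ∈ Icc 1 m, ∑ k ∈ range m, ∑ v ∈ compositions k (m - j),
          qNat r ^ j * X ^ (r * (m - j)) * (m.choose j : ℚ[X]) * compositionTerm j (m - j) k v := by
        rw [Jbar_add_eq_sum_Jbar hr hm]
        refine sum_congr rfl fun j hj => ?_
        simp_rw [hJbar j hj, mul_sum]
    _ = ∑ k ∈ range m, ∑ j ∈ Icc 1 m, ∑ v ∈ compositions k (m - j),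
          compositionTerm r m (k + 1) (Fin.cons j v) := by
        rw [sum_comm]
        refine sum_congr rfl fun k _ => sum_congr rfl fun j hj => sum_congr rfl fun v hv => ?_
        rw [compositionTerm_cons (mem_compositions.1 hv).1 (mem_Icc.1 hj).2]
    _ = ∑ k ∈ range (m + 1), ∑ u ∈ compositions k m, compositionTerm r m k u := by
        simp_rw [sum_range_succ' _ m, compositions_zero_of_ne_zero hm.ne', sum_empty, add_zero,
          sum_compositions_succ]

/-- for `n − 1 ≥ r ≥ 1`,
`J̄_n^{(r)} = ∑_{k=1}^{n−r} ∑_{(u_1,…,u_k)} [r]_q^{u_1} [u_1]_q^{u_2} ⋯ [u_{k−1}]_q^{u_k}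
q^{σ(u) + r(n−r−u_1)} (n−r)!/(u_1!⋯u_k!)`, the inner sum being over the
compositions of `n − r` into `k` strictly positive parts, and
`σ(u) = ∑_{1 ≤ i, i+2 ≤ j ≤ k} u_i u_j`. -/
theorem Jbar_explicit_formula (n r : ℕ) (hr : 1 ≤ r) (hrn : r + 1 ≤ n) :
    Jbar n r =
      ∑ k ∈ Finset.Icc 1 (n - r), ∑ u ∈ compositions k (n - r),
        chainQ r k u * Polynomial.X ^ (sigmaComp k u + r * (n - r - firstPart k u)) *
          (Nat.multinomial Finset.univ u : Polynomial ℚ) := by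
  obtain ⟨m, rfl⟩ : ∃ m, n = m + r := ⟨n - r, by omega⟩
  rw [Nat.add_sub_cancel, Jbar_add_eq_sum_compositions m hr, sum_range_succ',
    compositions_zero_of_ne_zero (by omega), sum_empty, add_zero, range_eq_Ico,
    sum_Ico_add' (fun k => ∑ u ∈ compositions k m, compositionTerm r m k u), zero_add,
    Ico_add_one_right_eq_Icc]
  rfl
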